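/- (Theorem: the size of PLST(T) is linear) Let T be a p-string of length n ≥ 1 ending with a sentinel symbol $ ∈ Σ that occurs nowhere else in T. Then the total number of nodes of PLST(T), i.e., |V1 ∪ V2|, is at most 4n, where V1 is the set of Type 1 nodes and V2 the set of Type 2 nodes. -/

import Mathlib

open List

variable {σ π : Type*}

/-- The prev-encoding symbol of `w` at (0-indexed) position `i`:
constants are kept; a parameter is encoded by the distance to its
previous occurrence, or `0` if it has no previous occurrence. -/
def prevAt [DecidableEq σ] [DecidableEq π] (w : List (σ ⊕ π)) (i : ℕ) : σ ⊕ ℕ :=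
  match w[i]? with
  | some (Sum.inl a) => Sum.inl a
  | some (Sum.inr x) =>
      let s := (Finset.range i).filter (fun j => w[j]? = some (Sum.inr x))
      if h : s.Nonempty then Sum.inr (i - s.max' h) else Sum.inr 0
  | none => Sum.inr 0

/-- The prev-encoding `⟨w⟩` of a p-string `w`. -/
def prevEncode [DecidableEq σ] [DecidableEq π] (w : List (σ ⊕ π)) : List (σ ⊕ ℕ) :=
  (List.range w.length).map (prevAt w)

/-- The `k`-re-encoding `⟨u⟩ₖ` of a pv-string `u`: a numeric symbol `u[i]`
(1-indexed) is replaced by `0` whenever `u[i] ≥ i - k + 1`. -/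
def reEncode (k : ℕ) (u : List (σ ⊕ ℕ)) : List (σ ⊕ ℕ) :=
  (List.range u.length).map (fun i =>
    match u[i]? with
    | some (Sum.inl a) => Sum.inl a
    | some (Sum.inr m) => if i + 2 ≤ m + k then Sum.inr (0 : ℕ) else Sum.inr m
    | none => Sum.inr 0)

/-- The implicit suffix link `sl(u) = ⟨u[2:]⟩₁`. -/
def sl (u : List (σ ⊕ ℕ)) : List (σ ⊕ ℕ) := reEncode 1 u.tail

/-- The set of prev-encoded substrings of `T`. -/
def PrevSub [DecidableEq σ] [DecidableEq π] (T : List (σ ⊕ π)) : Set (List (σ ⊕ ℕ)) :=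
  { u | ∃ w, w <:+: T ∧ u = prevEncode w }

/-- `u` is a leaf of `PrevSub T`: it belongs to `PrevSub T` and is not a
proper prefix of any element of `PrevSub T`. -/
def IsLeaf [DecidableEq σ] [DecidableEq π] (T : List (σ ⊕ π)) (u : List (σ ⊕ ℕ)) : Prop :=
  u ∈ PrevSub T ∧ ∀ v ∈ PrevSub T, u <+: v → u = v

/-- `u` is a branching element of `PrevSub T`: two distinct one-symbol
extensions of `u` belong to `PrevSub T`. -/
def Branching [DecidableEq σ] [DecidableEq π] (T : List (σ ⊕ π)) (u : List (σ ⊕ ℕ)) : Prop :=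
  u ∈ PrevSub T ∧
    ∃ a b : σ ⊕ ℕ, a ≠ b ∧ u ++ [a] ∈ PrevSub T ∧ u ++ [b] ∈ PrevSub T

/-- The Type 1 nodes of the PLST: leaves and branching elements of `PrevSub T`. -/
def TypeOne [DecidableEq σ] [DecidableEq π] (T : List (σ ⊕ π)) (u : List (σ ⊕ ℕ)) : Prop :=
  IsLeaf T u ∨ Branching T u

/-- The Type 2 nodes of the PLST: nonempty non-Type-1 elements of `PrevSub T`
whose suffix link points at a Type 1 node. -/
def TypeTwo [DecidableEq σ] [DecidableEq π] (T : List (σ ⊕ π)) (u : List (σ ⊕ ℕ)) : Prop :=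
  u ∈ PrevSub T ∧ u ≠ [] ∧ ¬ TypeOne T u ∧ TypeOne T (sl u)

section AuxLemmas

variable [DecidableEq σ] [DecidableEq π]

lemma prevEncode_length (w : List (σ ⊕ π)) : (prevEncode w).length = w.length := by
  simp [prevEncode]

lemma reEncode_length (k : ℕ) (u : List (σ ⊕ ℕ)) : (reEncode k u).length = u.length := by
  simp [reEncode]

lemma sl_length (u : List (σ ⊕ ℕ)) : (sl u).length = u.length - 1 := by
  simp [sl, reEncode_length]

lemma prevEncode_nil : prevEncode ([] : List (σ ⊕ π)) = [] := by
  simp [prevEncode]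

lemma reEncode_nil (k : ℕ) : reEncode k ([] : List (σ ⊕ ℕ)) = [] := by
  simp [reEncode]

lemma prevEncode_getElem (w : List (σ ⊕ π)) (i : ℕ) (h : i < (prevEncode w).length) :
    (prevEncode w)[i] = prevAt w i := by
  simp [prevEncode]

lemma reEncode_getElem (k : ℕ) (u : List (σ ⊕ ℕ)) (i : ℕ) (h : i < (reEncode k u).length) :
    (reEncode k u)[i] = (match u[i]? with
      | some (Sum.inl a) => Sum.inl a
      | some (Sum.inr m) => if i + 2 ≤ m + k then Sum.inr (0 : ℕ) else Sum.inr m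
      | none => Sum.inr 0) := by
  simp only [reEncode, List.getElem_map, List.getElem_range]
  rfl

lemma prevAt_eq_inl {w : List (σ ⊕ π)} {i : ℕ} {a : σ} (hw : w[i]? = some (Sum.inl a)) :
    prevAt w i = Sum.inl a := by
  unfold prevAt
  rw [hw]

lemma prevAt_eq_inr {w : List (σ ⊕ π)} {i : ℕ} {x : π} (hw : w[i]? = some (Sum.inr x)) :
    prevAt w i =
      (if h : ((Finset.range i).filter (fun j => w[j]? = some (Sum.inr x))).Nonempty
        then Sum.inr (i - ((Finset.range i).filter
          (fun j => w[j]? = some (Sum.inr x))).max' h)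
        else Sum.inr 0) := by
  unfold prevAt
  rw [hw]

lemma prevAt_congr {w w' : List (σ ⊕ π)} {i : ℕ} (h : ∀ j ≤ i, w[j]? = w'[j]?) :
    prevAt w i = prevAt w' i := by
  have hfilter : ∀ x : π, (Finset.range i).filter (fun j => w[j]? = some (Sum.inr x)) =
      (Finset.range i).filter (fun j => w'[j]? = some (Sum.inr x)) := by
    intro x
    apply Finset.filter_congr
    intro j hj
    rw [h j (le_of_lt (Finset.mem_range.mp hj))]
  cases hc : w'[i]? with
  | none =>
      unfold prevAt
      rw [h i le_rfl, hc]
  | some c =>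
      cases c with
      | inl a => rw [prevAt_eq_inl ((h i le_rfl).trans hc), prevAt_eq_inl hc]
      | inr x =>
          rw [prevAt_eq_inr ((h i le_rfl).trans hc), prevAt_eq_inr hc, hfilter x]

lemma prevEncode_take (w : List (σ ⊕ π)) (m : ℕ) :
    prevEncode (w.take m) = (prevEncode w).take m := by
  apply List.ext_getElem
  · simp [prevEncode_length]
  intro i h1 h2
  rw [List.getElem_take, prevEncode_getElem, prevEncode_getElem]
  have him : i < m := by
    simp [prevEncode_length] at h1; omega
  apply prevAt_congr
  intro j hj
  rw [List.getElem?_take, if_pos (by omega : j < m)]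

lemma reEncode_take (k : ℕ) (u : List (σ ⊕ ℕ)) (m : ℕ) :
    reEncode k (u.take m) = (reEncode k u).take m := by
  apply List.ext_getElem
  · simp [reEncode_length]
  intro i h1 h2
  have him : i < m := by
    simp [reEncode_length] at h1; omega
  rw [List.getElem_take, reEncode_getElem, reEncode_getElem,
    List.getElem?_take, if_pos him]

lemma take_tail {α : Type*} (l : List α) (m : ℕ) : (l.take (m + 1)).tail = l.tail.take m := by
  rw [← List.drop_one, ← List.drop_one, List.drop_take]
  norm_num

lemma take_length_take {α : Type*} (l : List α) (j : ℕ) :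
    l.take ((l.take j).length) = l.take j := by
  rw [List.length_take]
  rcases le_total j l.length with h | h
  · rw [min_eq_left h]
  · rw [min_eq_right h, List.take_length, List.take_of_length_le h]

lemma sl_take (u : List (σ ⊕ ℕ)) (m : ℕ) : sl (u.take (m + 1)) = (sl u).take m := by
  rw [sl, sl, take_tail, reEncode_take]

lemma prevEncode_tail (w : List (σ ⊕ π)) : prevEncode w.tail = sl (prevEncode w) := by
  unfold sl
  apply List.ext_getElem
  · simp [prevEncode_length, reEncode_length]
  intro i h1 h2
  have hiw : i + 1 < w.length := by
    simp [prevEncode_length] at h1; omega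
  have hten : (prevEncode w).tail[i]? = some (prevAt w (i + 1)) := by
    rw [List.getElem?_tail, List.getElem?_eq_getElem (by simp [prevEncode_length]; omega),
      prevEncode_getElem]
  rw [prevEncode_getElem, reEncode_getElem, hten]
  have hwt : w.tail[i]? = w[i + 1]? := List.getElem?_tail
  obtain ⟨c, hc⟩ : ∃ c, w[i + 1]? = some c :=
    ⟨w[i + 1], List.getElem?_eq_getElem hiw⟩
  cases c with
  | inl a =>
      rw [prevAt_eq_inl (hwt.trans hc), prevAt_eq_inl hc]
  | inr x =>
      rw [prevAt_eq_inr (hwt.trans hc), prevAt_eq_inr hc]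
      set s := (Finset.range (i + 1)).filter (fun j => w[j]? = some (Sum.inr x)) with hs
      set s' := (Finset.range i).filter (fun j => w.tail[j]? = some (Sum.inr x)) with hs'
      have hmem : ∀ j : ℕ, j ∈ s' ↔ j + 1 ∈ s := by
        intro j
        simp only [hs, hs', Finset.mem_filter, Finset.mem_range, List.getElem?_tail]
        constructor
        · rintro ⟨h1, h2⟩; exact ⟨by omega, h2⟩
        · rintro ⟨h1, h2⟩; exact ⟨by omega, h2⟩
      by_cases hne' : s'.Nonempty
      · have hnes : s.Nonempty := ⟨s'.max' hne' + 1, (hmem _).mp (Finset.max'_mem s' hne')⟩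
        have hmax : s.max' hnes = s'.max' hne' + 1 := by
          apply Nat.le_antisymm
          · apply Finset.max'_le
            intro y hy
            match y with
            | 0 => omega
            | z + 1 =>
                have : z ∈ s' := (hmem z).mpr hy
                have := Finset.le_max' s' z this
                omega
          · exact Finset.le_max' s _ ((hmem _).mp (Finset.max'_mem s' hne'))
        rw [dif_pos hne', dif_pos hnes, hmax]
        have hM : s'.max' hne' < i := by
          have := Finset.max'_mem s' hne'
          simp only [hs', Finset.mem_filter, Finset.mem_range] at this
          exact this.1
        simp only []
        rw [if_neg (by omega)]
        congr 1
        omega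
      · rw [dif_neg hne']
        by_cases hnes : s.Nonempty
        · have hmax : s.max' hnes = 0 := by
            have hle : s.max' hnes ≤ 0 := by
              apply Finset.max'_le
              intro y hy
              match y with
              | 0 => exact le_rfl
              | z + 1 =>
                  exact absurd (⟨z, (hmem z).mpr hy⟩ : s'.Nonempty) hne'
            omega
          rw [dif_pos hnes, hmax]
          simp only []
          rw [if_pos (by omega)]
        · rw [dif_neg hnes]
          simp only []
          rw [if_neg (by omega)]

lemma sl_prevEncode (w : List (σ ⊕ π)) : sl (prevEncode w) = prevEncode w.tail :=
  (prevEncode_tail w).symm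

end AuxLemmas

/-- For a text of length `n ≥ 1` ending with a sentinel occurring nowhere else,
the total number of nodes of `PLST(T)`, i.e. `|V₁ ∪ V₂|`, is at most `4n`. -/
theorem card_plst_nodes_le [DecidableEq σ] [DecidableEq π]
    (T' : List (σ ⊕ π)) (d : σ) (T : List (σ ⊕ π))
    (hT : T = T' ++ [Sum.inl d]) (hd : Sum.inl d ∉ T') :
    ({u : List (σ ⊕ ℕ) | TypeOne T u} ∪ {u : List (σ ⊕ ℕ) | TypeTwo T u}).Finite ∧
      ({u : List (σ ⊕ ℕ) | TypeOne T u} ∪ {u : List (σ ⊕ ℕ) | TypeTwo T u}).ncard ≤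
        4 * T.length := by
  classical
  set n := T.length with hn
  have hn1 : 1 ≤ n := by
    rw [hn, hT]; simp
  -- the finite set of prev-encoded substrings
  set Sfin : Finset (List (σ ⊕ ℕ)) :=
    ((Finset.range (n + 1)) ×ˢ (Finset.range (n + 1))).image
      (fun p => prevEncode ((T.drop p.1).take p.2)) with hSfin
  have memS : ∀ u : List (σ ⊕ ℕ), u ∈ Sfin ↔ u ∈ PrevSub T := by
    intro u
    constructor
    · intro hu
      rw [hSfin] at hu
      obtain ⟨⟨i, j⟩, hij, rfl⟩ := Finset.mem_image.mp hu
      refine ⟨(T.drop i).take j, ?_, rfl⟩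
      exact (List.take_prefix _ _).isInfix.trans (List.drop_suffix _ _).isInfix
    · rintro ⟨w, ⟨s, t, hst⟩, rfl⟩
      rw [hSfin]
      apply Finset.mem_image.mpr
      refine ⟨⟨s.length, w.length⟩, ?_, ?_⟩
      · have : s.length + w.length + t.length = n := by
          rw [hn, ← hst]; simp; omega
        simp only [Finset.mem_product, Finset.mem_range]
        omega
      · have h1 : T.drop s.length = w ++ t := by
          rw [← hst, List.append_assoc, List.drop_left]
        rw [h1]
        congr 1
        exact List.take_left
  have hlenS : ∀ u ∈ Sfin, u.length ≤ n := by
    intro u hu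
    rw [hSfin] at hu
    obtain ⟨⟨i, j⟩, hij, rfl⟩ := Finset.mem_image.mp hu
    rw [prevEncode_length]
    simp [hn]
  -- closures
  have htakeS : ∀ u ∈ Sfin, ∀ m, u.take m ∈ Sfin := by
    intro u hu m
    rw [memS] at hu ⊢
    obtain ⟨w, hw, rfl⟩ := hu
    refine ⟨w.take m, ?_, (prevEncode_take w m).symm⟩
    exact (List.take_prefix _ _).isInfix.trans hw
  have hslS : ∀ u ∈ Sfin, sl u ∈ Sfin := by
    intro u hu
    rw [memS] at hu ⊢
    obtain ⟨w, hw, rfl⟩ := hu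
    exact ⟨w.tail, (List.tail_suffix w).isInfix.trans hw, (prevEncode_tail w).symm⟩
  have hdlS : ∀ u ∈ Sfin, u.dropLast ∈ Sfin := by
    intro u hu
    rw [List.dropLast_eq_take]
    exact htakeS u hu _
  have hnilS : ([] : List (σ ⊕ ℕ)) ∈ Sfin := by
    rw [memS]
    exact ⟨[], ⟨[], T, by simp⟩, prevEncode_nil.symm⟩
  set X := Sfin.erase ([] : List (σ ⊕ ℕ)) with hX
  have hXsub : X ⊆ Sfin := Finset.erase_subset _ _
  have hXcard : X.card + 1 = Sfin.card := Finset.card_erase_add_one hnilS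
  -- the canonical length-1 element
  have hu1 : prevEncode (T.take 1) ∈ Sfin := by
    rw [memS]
    exact ⟨T.take 1, (List.take_prefix _ _).isInfix, rfl⟩
  have hu1len : (prevEncode (T.take 1)).length = 1 := by
    rw [prevEncode_length, List.length_take]
    omega
  have hu1ne : prevEncode (T.take 1) ≠ [] := by
    intro h
    rw [h] at hu1len
    simp at hu1len
  have hu1X : prevEncode (T.take 1) ∈ X := Finset.mem_erase.mpr ⟨hu1ne, hu1⟩
  -- parent maps and leaf sets
  set imgD := X.image List.dropLast with himgD
  set imgL := X.image sl with himgL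
  have himgDsub : imgD ⊆ Sfin := by
    intro v hv
    obtain ⟨z, hz, rfl⟩ := Finset.mem_image.mp hv
    exact hdlS z (hXsub hz)
  have himgLsub : imgL ⊆ Sfin := by
    intro v hv
    obtain ⟨z, hz, rfl⟩ := Finset.mem_image.mp hv
    exact hslS z (hXsub hz)
  set PL := Sfin \ imgD with hPL
  set SLL := Sfin \ imgL with hSLL
  have hnil_imgD : ([] : List (σ ⊕ ℕ)) ∈ imgD := by
    apply Finset.mem_image.mpr
    refine ⟨prevEncode (T.take 1), hu1X, ?_⟩
    rw [List.dropLast_eq_take, hu1len]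
    simp
  have hnil_imgL : ([] : List (σ ⊕ ℕ)) ∈ imgL := by
    apply Finset.mem_image.mpr
    refine ⟨prevEncode (T.take 1), hu1X, ?_⟩
    apply List.eq_nil_of_length_eq_zero
    rw [sl_length, hu1len]
  -- canonical forms
  have hcanonPL : ∀ v ∈ PL, v = prevEncode (T.drop (n - v.length)) := by
    intro v hv
    obtain ⟨hvS, hvnd⟩ := Finset.mem_sdiff.mp hv
    rw [hSfin] at hvS
    obtain ⟨⟨i, j⟩, hij, rfl⟩ := Finset.mem_image.mp hvS
    simp only [Finset.mem_product, Finset.mem_range] at hij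
    have hL : (T.drop i).length = n - i := by rw [List.length_drop, ← hn]
    have hwlen : ((T.drop i).take j).length = min j (n - i) := by
      rw [List.length_take, hL]
    by_cases hlt : ((T.drop i).take j).length < (T.drop i).length
    · exfalso
      apply hvnd
      apply Finset.mem_image.mpr
      refine ⟨prevEncode ((T.drop i).take (((T.drop i).take j).length + 1)), ?_, ?_⟩
      · apply Finset.mem_erase.mpr
        constructor
        · intro h
          have hc := congrArg List.length h
          rw [prevEncode_length, List.length_take] at hc
          simp only [List.length_nil] at hc
          omega
        · rw [memS]
          exact ⟨_, (List.take_prefix _ _).isInfix.trans (List.drop_suffix _ _).isInfix, rfl⟩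
      · have hlen2 : ((T.drop i).take (((T.drop i).take j).length + 1)).length
            = ((T.drop i).take j).length + 1 := by
          rw [List.length_take]
          omega
        rw [List.dropLast_eq_take, prevEncode_length, hlen2, Nat.add_sub_cancel,
          ← prevEncode_take]
        congr 1
        rw [List.take_take,
          min_eq_left (Nat.le_succ (((T.drop i).take j).length)), take_length_take]
    · have hweq : (T.drop i).take j = T.drop i := by
        apply List.take_of_length_le
        rw [hL]
        omega
      rw [hweq, prevEncode_length, hL]
      congr 2
      omega
  have hcanonSLL : ∀ v ∈ SLL, v = prevEncode (T.take v.length) := by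
    intro v hv
    obtain ⟨hvS, hvnl⟩ := Finset.mem_sdiff.mp hv
    rw [hSfin] at hvS
    obtain ⟨⟨i, j⟩, hij, rfl⟩ := Finset.mem_image.mp hvS
    simp only [Finset.mem_product, Finset.mem_range] at hij
    rcases Nat.eq_zero_or_pos i with hi0 | hipos
    · subst hi0
      rw [prevEncode_length]
      congr 1
      rw [List.drop_zero, take_length_take]
    · exfalso
      apply hvnl
      apply Finset.mem_image.mpr
      obtain ⟨i', rfl⟩ : ∃ i', i = i' + 1 := ⟨i - 1, by omega⟩
      refine ⟨prevEncode ((T.drop i').take (((T.drop (i' + 1)).take j).length + 1)), ?_, ?_⟩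
      · apply Finset.mem_erase.mpr
        constructor
        · intro h
          have hc := congrArg List.length h
          rw [prevEncode_length, List.length_take, List.length_drop, ← hn] at hc
          simp only [List.length_nil] at hc
          omega
        · rw [memS]
          exact ⟨_, (List.take_prefix _ _).isInfix.trans (List.drop_suffix _ _).isInfix, rfl⟩
      · rw [sl_prevEncode, take_tail, List.tail_drop]
        congr 1
        rw [take_length_take]
  -- cardinality of PL and SLL
  have hPLcard : PL.card ≤ n := by
    have : PL.card ≤ (Finset.Icc 1 n).card := by
      apply Finset.card_le_card_of_injOn List.length
      · intro v hv
        have hvS := (Finset.mem_sdiff.mp hv).1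
        have hvne : v ≠ [] := by
          intro h
          exact (Finset.mem_sdiff.mp hv).2 (h ▸ hnil_imgD)
        rw [Finset.mem_coe, Finset.mem_Icc]
        exact ⟨List.length_pos_iff.mpr hvne, hlenS v hvS⟩
      · intro v1 h1 v2 h2 hlen
        rw [hcanonPL v1 h1, hcanonPL v2 h2, hlen]
    rwa [Nat.card_Icc, Nat.add_sub_cancel] at this
  have hSLLcard : SLL.card ≤ n := by
    have : SLL.card ≤ (Finset.Icc 1 n).card := by
      apply Finset.card_le_card_of_injOn List.length
      · intro v hv
        have hvS := (Finset.mem_sdiff.mp hv).1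
        have hvne : v ≠ [] := by
          intro h
          exact (Finset.mem_sdiff.mp hv).2 (h ▸ hnil_imgL)
        rw [Finset.mem_coe, Finset.mem_Icc]
        exact ⟨List.length_pos_iff.mpr hvne, hlenS v hvS⟩
      · intro v1 h1 v2 h2 hlen
        rw [hcanonSLL v1 h1, hcanonSLL v2 h2, hlen]
    rwa [Nat.card_Icc, Nat.add_sub_cancel] at this
  have hPLsplit : PL.card + imgD.card = Sfin.card := by
    rw [hPL]
    exact Finset.card_sdiff_add_card_eq_card himgDsub
  have hSLLsplit : SLL.card + imgL.card = Sfin.card := by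
    rw [hSLL]
    exact Finset.card_sdiff_add_card_eq_card himgLsub
  -- branching set
  set BF := Sfin.filter
    (fun v => ∃ a b : σ ⊕ ℕ, a ≠ b ∧ v ++ [a] ∈ Sfin ∧ v ++ [b] ∈ Sfin) with hBF
  have hBFimg : BF ⊆ imgD := by
    intro b hb
    obtain ⟨hbS, a, b', hab, ha, hb'⟩ := Finset.mem_filter.mp hb
    apply Finset.mem_image.mpr
    refine ⟨b ++ [a], Finset.mem_erase.mpr ⟨by simp, ha⟩, List.dropLast_concat⟩
  have hfiber2 : imgD.card + BF.card ≤ X.card := by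
    have hXsum : X.card = ∑ b ∈ imgD, (X.filter (fun x => x.dropLast = b)).card :=
      Finset.card_eq_sum_card_fiberwise (fun x hx => Finset.mem_image_of_mem _ hx)
    have hpt : ∀ b ∈ imgD, 1 + (if b ∈ BF then 1 else 0) ≤
        (X.filter (fun x => x.dropLast = b)).card := by
      intro b hb
      by_cases hbBF : b ∈ BF
      · rw [if_pos hbBF]
        obtain ⟨hbS, a, b', hab, ha, hb'⟩ := Finset.mem_filter.mp hbBF
        have h1 : b ++ [a] ∈ X.filter (fun x => x.dropLast = b) := by
          apply Finset.mem_filter.mpr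
          exact ⟨Finset.mem_erase.mpr ⟨by simp, ha⟩, List.dropLast_concat⟩
        have h2 : b ++ [b'] ∈ X.filter (fun x => x.dropLast = b) := by
          apply Finset.mem_filter.mpr
          exact ⟨Finset.mem_erase.mpr ⟨by simp, hb'⟩, List.dropLast_concat⟩
        have hne12 : b ++ [a] ≠ b ++ [b'] := by
          intro h
          exact hab (by simpa using h)
        have := Finset.one_lt_card.mpr ⟨_, h1, _, h2, hne12⟩
        omega
      · rw [if_neg hbBF]
        obtain ⟨z, hz, rfl⟩ := Finset.mem_image.mp hb
        have : z ∈ X.filter (fun x => x.dropLast = z.dropLast) :=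
          Finset.mem_filter.mpr ⟨hz, rfl⟩
        have := Finset.card_pos.mpr ⟨z, this⟩
        omega
    calc imgD.card + BF.card
        = ∑ b ∈ imgD, 1 + (imgD.filter (fun b => b ∈ BF)).card := by
          rw [Finset.sum_const, smul_eq_mul, mul_one,
            Finset.filter_mem_eq_inter, Finset.inter_eq_right.mpr hBFimg]
      _ = ∑ b ∈ imgD, 1 + ∑ b ∈ imgD, (if b ∈ BF then 1 else 0) := by
          rw [Finset.card_filter]
      _ = ∑ b ∈ imgD, (1 + if b ∈ BF then 1 else 0) := by
          rw [Finset.sum_add_distrib]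
      _ ≤ ∑ b ∈ imgD, (X.filter (fun x => x.dropLast = b)).card :=
          Finset.sum_le_sum hpt
      _ = X.card := hXsum.symm
  -- the U set (sl-children of branching nodes)
  set UF := X.filter (fun u => sl u ∈ BF) with hUF
  have hUFsub : UF ⊆ X := Finset.filter_subset _ _
  have hmaster : UF.card + imgL.card ≤ BF.card + X.card := by
    have himg_split : imgL ⊆ UF.image sl ∪ (X \ UF).image sl := by
      rw [← Finset.image_union]
      intro v hv
      obtain ⟨z, hz, rfl⟩ := Finset.mem_image.mp hv
      apply Finset.mem_image_of_mem
      rw [Finset.union_sdiff_of_subset hUFsub]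
      exact hz
    have h1 : imgL.card ≤ (UF.image sl).card + ((X \ UF).image sl).card :=
      le_trans (Finset.card_le_card himg_split) (Finset.card_union_le _ _)
    have h2 : (UF.image sl).card ≤ BF.card := by
      apply Finset.card_le_card
      intro v hv
      obtain ⟨z, hz, rfl⟩ := Finset.mem_image.mp hv
      exact (Finset.mem_filter.mp hz).2
    have h3 : ((X \ UF).image sl).card ≤ (X \ UF).card := Finset.card_image_le
    have h4 : (X \ UF).card + UF.card = X.card :=
      Finset.card_sdiff_add_card_eq_card hUFsub
    omega
  -- inclusion of the node sets
  have hTypeOne : ∀ u : List (σ ⊕ ℕ), TypeOne T u → u ∈ PL ∪ BF := by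
    intro u hu
    cases hu with
    | inr hbr =>
        apply Finset.mem_union_right
        obtain ⟨huS, a, b, hab, ha, hb⟩ := hbr
        exact Finset.mem_filter.mpr ⟨(memS u).mpr huS, a, b, hab,
          (memS _).mpr ha, (memS _).mpr hb⟩
    | inl hlf =>
        apply Finset.mem_union_left
        obtain ⟨huS, hmax⟩ := hlf
        apply Finset.mem_sdiff.mpr
        refine ⟨(memS u).mpr huS, ?_⟩
        intro hu_img
        obtain ⟨z, hzX, hdz⟩ := Finset.mem_image.mp hu_img
        have hzS : z ∈ PrevSub T := (memS z).mp (hXsub hzX)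
        have hpre : u <+: z := hdz ▸ List.dropLast_prefix z
        have := hmax z hzS hpre
        have hzne : z ≠ [] := (Finset.mem_erase.mp hzX).1
        have : z.dropLast.length = z.length := by rw [hdz, this]
        rw [List.length_dropLast] at this
        have := List.length_pos_iff.mpr hzne
        omega
  have hTypeTwo : ∀ u : List (σ ⊕ ℕ), TypeTwo T u → u ∈ UF := by
    intro u hu
    obtain ⟨huS, hune, hnot1, hsl1⟩ := hu
    have huX : u ∈ X := Finset.mem_erase.mpr ⟨hune, (memS u).mpr huS⟩
    apply Finset.mem_filter.mpr
    refine ⟨huX, ?_⟩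
    -- sl u is branching
    have hbr : Branching T (sl u) := by
      cases hsl1 with
      | inr h => exact h
      | inl hleaf =>
          exfalso
          -- u is not a leaf, so it has a proper extension; push to sl
          have hnleaf : ¬ IsLeaf T u := fun h => hnot1 (Or.inl h)
          rw [IsLeaf] at hnleaf
          push_neg at hnleaf
          obtain ⟨v, hvS, hpre, hne⟩ := hnleaf huS
          have hlt : u.length < v.length := by
            rcases Nat.lt_or_ge u.length v.length with h | h
            · exact h
            · exact absurd (hpre.eq_of_length (le_antisymm hpre.length_le h)) hne
          have hueq : u = v.take u.length := List.prefix_iff_eq_take.mp hpre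
          have hupos : 0 < u.length := List.length_pos_iff.mpr hune
          -- z := v.take (u.length + 1)
          have hzS : v.take (u.length + 1) ∈ PrevSub T := by
            have := htakeS v ((memS v).mpr hvS) (u.length + 1)
            exact (memS _).mp this
          have hslzS : sl (v.take (u.length + 1)) ∈ PrevSub T := by
            have := hslS _ ((memS _).mpr hzS)
            exact (memS _).mp this
          have hslz : sl (v.take (u.length + 1)) = (sl v).take u.length :=
            sl_take v u.length
          have hslu : sl u = (sl v).take (u.length - 1) := by
            conv_lhs => rw [hueq]
            have h9 : u.length = (u.length - 1) + 1 := by omega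
            rw [h9, sl_take]
            simp
          have hslpre : sl u <+: sl (v.take (u.length + 1)) := by
            rw [hslu, hslz]
            have : (sl v).take (u.length - 1) = ((sl v).take u.length).take (u.length - 1) := by
              rw [List.take_take]
              congr 1
              omega
            rw [this]
            exact List.take_prefix _ _
          have := hleaf.2 _ hslzS hslpre
          have hlen1 : (sl u).length = u.length - 1 := sl_length u
          have hlen2 : (sl (v.take (u.length + 1))).length = u.length := by
            rw [sl_length, List.length_take]
            have : v.length ≥ u.length + 1 := by omega
            omega
          rw [this] at hlen1
          omega
    exact Finset.mem_filter.mpr ⟨(memS _).mpr hbr.1, by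
      obtain ⟨_, a, b, hab, ha, hb⟩ := hbr
      exact ⟨a, b, hab, (memS _).mpr ha, (memS _).mpr hb⟩⟩
  -- assemble
  have hsub : ({u : List (σ ⊕ ℕ) | TypeOne T u} ∪ {u : List (σ ⊕ ℕ) | TypeTwo T u})
      ⊆ ↑(PL ∪ BF ∪ UF) := by
    intro u hu
    simp only [Set.mem_union, Set.mem_setOf_eq] at hu
    simp only [Finset.coe_union, Set.mem_union, Finset.mem_coe]
    cases hu with
    | inl h =>
        rcases Finset.mem_union.mp (hTypeOne u h) with h' | h'
        · exact Or.inl (Or.inl h')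
        · exact Or.inl (Or.inr h')
    | inr h => exact Or.inr (hTypeTwo u h)
  constructor
  · exact Set.Finite.subset (Finset.finite_toSet _) hsub
  · have hle : ({u : List (σ ⊕ ℕ) | TypeOne T u} ∪ {u : List (σ ⊕ ℕ) | TypeTwo T u}).ncard
        ≤ (PL ∪ BF ∪ UF).card := by
      have := Set.ncard_le_ncard hsub (Finset.finite_toSet _)
      rwa [Set.ncard_coe_finset] at this
    have hcard_union : (PL ∪ BF ∪ UF).card ≤ PL.card + BF.card + UF.card :=
      le_trans (Finset.card_union_le _ _) (by
        have := Finset.card_union_le PL BF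
        omega)
    -- final arithmetic
    omega
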